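/- Let r, p, n be positive integers with p dividing r, let c = ((1,1,…,1),1) ∈ G(r,1,n), and let d = gcd(p,n). Then (Z/rZ)^n ∩ Z(G(r,p,n)) = {c^{jp/d} : j ∈ [0, dr/p − 1]}. Moreover this subgroup equals the center of G(r,p,n) unless (r,p,n) is (1,1,2) or (2,2,2), in which case G(r,p,n) is abelian. -/

import Mathlib

open scoped Classical BigOperators
open CategoryTheory

noncomputable section

/-- The twisted centralizer of `ω` under `τ`-twisted conjugation. -/
def twistedCent {G : Type*} [Group G] (τ : G ≃* G) (ω : G) : Subgroup G where
  carrier := {g | g * ω * (τ g)⁻¹ = ω}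
  one_mem' := by simp
  mul_mem' := by
    intro a b ha hb
    simp only [Set.mem_setOf_eq] at ha hb ⊢
    have h : a * b * ω * (τ (a * b))⁻¹ = a * (b * ω * (τ b)⁻¹) * (τ a)⁻¹ := by
      simp only [map_mul, mul_inv_rev]
      group
    rw [h, hb, ha]
  inv_mem' := by
    intro a ha
    simp only [Set.mem_setOf_eq] at ha ⊢
    rw [map_inv, inv_inv]
    conv_lhs => rw [← ha]
    group

/-- The set of irreducible complex characters of `G`. -/
def irrCharSet (G : Type) [Group G] : Set (G → ℂ) :=
  {χ | ∃ V : FDRep ℂ G, Simple V ∧ χ = fun g => FDRep.character V g}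

/-- The induced character of `lam : H → ℂ`, via the Frobenius formula. -/
def indChar {G : Type} [Group G] [Fintype G] (H : Subgroup G) (lam : H → ℂ) (g : G) : ℂ :=
  (Nat.card H : ℂ)⁻¹ * ∑ x : G, if h : x⁻¹ * g * x ∈ H then lam ⟨x⁻¹ * g * x, h⟩ else 0

/-- `G` has a generalized involution model with respect to `τ`. -/
def HasGIMwrt (G : Type) [Group G] [Fintype G] (τ : G ≃* G) : Prop :=
  ∃ (R : Finset G) (lam : ∀ ω : G, twistedCent τ ω →* ℂ),
    (∀ ω ∈ R, ω * τ ω = 1) ∧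
    (∀ v : G, v * τ v = 1 → ∃! ω, ω ∈ R ∧ ∃ g : G, g * v * (τ g)⁻¹ = ω) ∧
    (∀ x : G, (∑ ω ∈ R, indChar (twistedCent τ ω) (fun h => lam ω h) x) =
      ∑ᶠ ψ ∈ irrCharSet G, ψ x)

/-- `G` has a generalized involution model. -/
def HasGIM (G : Type) [Group G] [Fintype G] : Prop :=
  ∃ τ : G ≃* G, (∀ g, τ (τ g) = g) ∧ HasGIMwrt G τ

end

noncomputable section

def WP (r n : ℕ) : Type := (Fin n → ZMod r) × Equiv.Perm (Fin n)

namespace WP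

variable {r n : ℕ}

def mk (x : Fin n → ZMod r) (π : Equiv.Perm (Fin n)) : WP r n := (x, π)

instance : Mul (WP r n) := ⟨fun g h => (g.1 ∘ ⇑h.2 + h.1, g.2 * h.2)⟩
instance : One (WP r n) := ⟨((0 : Fin n → ZMod r), 1)⟩
instance : Inv (WP r n) := ⟨fun g => (-(g.1 ∘ ⇑g.2⁻¹), g.2⁻¹)⟩

@[simp] theorem mul_def (g h : WP r n) : g * h = (g.1 ∘ ⇑h.2 + h.1, g.2 * h.2) := rfl
@[simp] theorem one_def : (1 : WP r n) = ((0 : Fin n → ZMod r), 1) := rfl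
@[simp] theorem inv_def (g : WP r n) : g⁻¹ = (-(g.1 ∘ ⇑g.2⁻¹), g.2⁻¹) := rfl
@[simp] theorem mk_fst (x : Fin n → ZMod r) (π : Equiv.Perm (Fin n)) : (mk x π).1 = x := rfl
@[simp] theorem mk_snd (x : Fin n → ZMod r) (π : Equiv.Perm (Fin n)) : (mk x π).2 = π := rfl

instance : Group (WP r n) where
  mul_assoc a b c := by
    refine Prod.ext ?_ ?_
    · funext i
      simp [Function.comp, add_assoc]
      exact add_assoc (a.1 (b.2 (c.2 i))) (b.1 (c.2 i)) (c.1 i)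
    · simp [mul_assoc]
      exact mul_assoc a.2 b.2 c.2
  one_mul a := by
    refine Prod.ext ?_ ?_
    · funext i; simp [Function.comp]
      exact zero_add (a.1 i)
    · simp
      exact one_mul a.2
  mul_one a := by
    refine Prod.ext ?_ ?_
    · funext i; simp [Function.comp]
      exact add_zero (a.1 i)
    · simp
      exact mul_one a.2
  inv_mul_cancel a := by
    refine Prod.ext ?_ ?_
    · funext i; simp [Function.comp]
      show -(a.1 (a.2.symm (a.2 i))) + a.1 i = 0
      rw [Equiv.symm_apply_apply, neg_add_cancel]
    · simp
      exact inv_mul_cancel a.2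

instance [NeZero r] : Fintype (WP r n) :=
  inferInstanceAs (Fintype ((Fin n → ZMod r) × Equiv.Perm (Fin n)))

/-- `Δ(x,π) = x_1 + ⋯ + x_n ∈ Z/rZ`. -/
def wDelta (g : WP r n) : ZMod r := ∑ i, g.1 i

/-- The transpose `(x,π)ᵀ = (π(x), π⁻¹)`. -/
def wT (g : WP r n) : WP r n := (g.1 ∘ ⇑g.2⁻¹, g.2⁻¹)

/-- The "complex conjugate" `(x,π) ↦ (-x, π)`. -/
def wBar (g : WP r n) : WP r n := (-g.1, g.2)

theorem wDelta_mul (g h : WP r n) : wDelta (g * h) = wDelta g + wDelta h := by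
  simp only [wDelta, mul_def, Pi.add_apply, Function.comp_apply, Finset.sum_add_distrib]
  rw [Equiv.sum_comp h.2 g.1]

theorem wDelta_one : wDelta (1 : WP r n) = 0 := by simp [wDelta]

theorem wDelta_inv (g : WP r n) : wDelta g⁻¹ = - wDelta g := by
  simp only [wDelta, inv_def, Pi.neg_apply, Function.comp_apply, Finset.sum_neg_distrib]
  rw [Equiv.sum_comp g.2⁻¹ g.1]

theorem wDelta_wT (g : WP r n) : wDelta (wT g) = wDelta g := by
  simp only [wDelta, wT, Function.comp_apply]
  exact Equiv.sum_comp g.2⁻¹ g.1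

theorem wDelta_wBar (g : WP r n) : wDelta (wBar g) = - wDelta g := by
  simp [wDelta, wBar, Finset.sum_neg_distrib]

theorem wT_mul (g h : WP r n) : wT (g * h) = wT h * wT g := by
  refine Prod.ext ?_ ?_
  · funext i
    simp [wT, Function.comp, Equiv.Perm.mul_apply, add_comm]
    exact add_comm (g.1 (g.2.symm i)) (h.1 (h.2.symm (g.2.symm i)))
  · simp [wT, mul_inv_rev]
    rfl

theorem wT_wT (g : WP r n) : wT (wT g) = g := by
  refine Prod.ext ?_ ?_
  · funext i; simp [wT, Function.comp]
  · simp [wT]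

theorem wBar_mul (g h : WP r n) : wBar (g * h) = wBar g * wBar h := by
  refine Prod.ext ?_ ?_
  · funext i; simp [wBar, Function.comp, add_comm]
    exact add_comm (-h.1 i) (-g.1 (h.2 i))
  · simp [wBar]
    rfl

theorem wBar_wBar (g : WP r n) : wBar (wBar g) = g := by
  refine Prod.ext ?_ ?_
  · funext i; simp [wBar]
  · simp [wBar]

end WP

/-- The complex reflection group `G(r,p,n)`, as a subgroup of the wreath product. -/
def Grpn (r p n : ℕ) : Subgroup (WP r n) where
  carrier := {g | WP.wDelta g ∈ AddSubgroup.zmultiples (p : ZMod r)}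
  one_mem' := by
    simp only [Set.mem_setOf_eq, WP.wDelta_one]
    exact zero_mem _
  mul_mem' := by
    intro a b ha hb
    simp only [Set.mem_setOf_eq, WP.wDelta_mul] at *
    exact add_mem ha hb
  inv_mem' := by
    intro a ha
    simp only [Set.mem_setOf_eq, WP.wDelta_inv] at *
    exact neg_mem ha

@[simp] theorem mem_Grpn {r p n : ℕ} {g : WP r n} :
    g ∈ Grpn r p n ↔ WP.wDelta g ∈ AddSubgroup.zmultiples (p : ZMod r) := Iff.rfl

namespace WP

/-- The central element `c = ((1,1,…,1), 1)`. -/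
def cElt (r n : ℕ) : WP r n := ((fun _ => 1), 1)

/-- The inversion set of a permutation. -/
def invSet {n : ℕ} (π : Equiv.Perm (Fin n)) : Finset (Fin n × Fin n) :=
  Finset.univ.filter fun q => q.1 < q.2 ∧ π q.2 < π q.1

/-- The set of 2-cycles `(i,j)` of a permutation. -/
def pairSet {n : ℕ} (π : Equiv.Perm (Fin n)) : Finset (Fin n × Fin n) :=
  Finset.univ.filter fun q => q.1 < q.2 ∧ π q.1 = q.2 ∧ π q.2 = q.1

/-- The set `B(g,ω)` of Adin–Postnikov–Roichman. -/
def Bset (r n : ℕ) (g w : WP r n) : Finset (Fin n) :=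
  if Odd r then ∅
  else Finset.univ.filter fun i => w.2 i = i ∧ Odd ((w.1 i).val) ∧
    r / 2 ≤ (g.1 i + (((w.1 i).val / 2 : ℕ) : ZMod r)).val

/-- The sign `sign_{r,n}(g,ω)`. -/
def signrn (r n : ℕ) (g w : WP r n) : ℚ :=
  (-1 : ℚ) ^ (Bset r n g w).card * (-1 : ℚ) ^ ((invSet g.2 ∩ pairSet w.2).card)

/-- Twisted conjugation `ω ↦ g ω gᵀ` on symmetric elements. -/
def symmConj {r n : ℕ} (g : WP r n) (w : {w : WP r n // wT w = w}) :
    {w : WP r n // wT w = w} :=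
  ⟨g * w.1 * wT g, by
    rw [wT_mul, wT_mul, wT_wT, w.2, mul_assoc]⟩

end WP

end

noncomputable section

namespace WP

theorem wT_mem_Grpn {r p n : ℕ} {g : WP r n} (hg : g ∈ Grpn r p n) :
    wT g ∈ Grpn r p n := by
  rw [mem_Grpn, wDelta_wT]; exact hg

/-- Twisted conjugation `ω ↦ g ω gᵀ` on symmetric elements of `G(r,p,n)`. -/
def symmConjP {r p n : ℕ} (g : Grpn r p n)
    (w : {w : Grpn r p n // wT (w : WP r n) = w}) :
    {w : Grpn r p n // wT (w : WP r n) = w} :=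
  ⟨⟨(g : WP r n) * (w.1 : WP r n) * wT (g : WP r n),
      mul_mem (mul_mem g.2 w.1.2) (wT_mem_Grpn g.2)⟩, by
    show wT ((g : WP r n) * (w.1 : WP r n) * wT (g : WP r n)) = _
    rw [wT_mul, wT_mul, wT_wT, w.2]
    exact (mul_assoc _ _ _).symm⟩

/-- The inverse transpose automorphism `g ↦ ḡ` of `G(r,p,n)`. -/
def barAut (r p n : ℕ) : Grpn r p n ≃* Grpn r p n where
  toFun g := ⟨wBar g.1, by
    rw [mem_Grpn, wDelta_wBar]; exact neg_mem g.2⟩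
  invFun g := ⟨wBar g.1, by
    rw [mem_Grpn, wDelta_wBar]; exact neg_mem g.2⟩
  left_inv g := Subtype.ext (wBar_wBar _)
  right_inv g := Subtype.ext (wBar_wBar _)
  map_mul' a b := Subtype.ext (wBar_mul _ _)

/-- `C(r,p,n) = (Z/rZ)^n ∩ Z(G(r,p,n))`, as a set of wreath product elements. -/
def CCset (r p n : ℕ) : Set (WP r n) :=
  {z | z.2 = 1 ∧ z ∈ Grpn r p n ∧ ∀ h ∈ Grpn r p n, z * h = h * z}

/-- The map `α_{j,k,z} : (x,π) ↦ z^{ℓ(π)} c^{k·Δ(x)} (jx, π)`. -/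
def alphaMap (r n : ℕ) (j k : ℤ) (z : WP r n) (g : WP r n) : WP r n :=
  z ^ (invSet g.2).card * cElt r n ^ (k * ((wDelta g).val : ℤ)) * mk (j • g.1) g.2

/-- The character of the subrepresentation of `ρ_{r,n}` on `V⁺_{r,n}`. -/
def chiPlus (r n : ℕ) [NeZero r] (g : WP r n) : ℚ :=
  ∑ w : {w : WP r n // wT w = w},
    if wDelta w.1 ∈ AddSubgroup.zmultiples (2 : ZMod r) ∧ symmConj g w = w
    then signrn r n g w.1 else 0

/-- The character of the subrepresentation of `ρ_{r,n}` on `V⁻_{r,n}`. -/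
def chiMinus (r n : ℕ) [NeZero r] (g : WP r n) : ℚ :=
  ∑ w : {w : WP r n // wT w = w},
    if wDelta w.1 ∉ AddSubgroup.zmultiples (2 : ZMod r) ∧ symmConj g w = w
    then signrn r n g w.1 else 0

/-- The modified set `B̃(g,ω)` used when `p` and `r/p` are both even. -/
def BsetTilde (r p n : ℕ) (g w : WP r n) : Finset (Fin n) :=
  if wDelta w ∈ AddSubgroup.zmultiples ((2 * p : ℕ) : ZMod r) then
    Finset.univ.filter fun i => w.2 i = i ∧ Odd ((w.1 i).val) ∧
      r / 2 ≤ (g.1 i + (((w.1 i).val / 2 : ℕ) : ZMod r)).val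
  else
    Finset.univ.filter fun i => w.2 i = i ∧ Even ((w.1 i).val) ∧
      r / 2 ≤ (g.1 i + (((w.1 i).val / 2 : ℕ) : ZMod r)).val

/-- The modified sign `s̃ign_{r,p,n}(g,ω)`. -/
def signTilde (r p n : ℕ) (g w : WP r n) : ℚ :=
  (-1 : ℚ) ^ (BsetTilde r p n g w).card * (-1 : ℚ) ^ ((invSet g.2 ∩ pairSet w.2).card)

end WP

end


private lemma aux_dvd_iff (p n v : ℕ) (hp : 0 < p) :
    p ∣ n * v ↔ p / Nat.gcd p n ∣ v := by
  set d := Nat.gcd p n with hd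
  have hd0 : 0 < d := Nat.gcd_pos_of_pos_left n hp
  have hdp : d ∣ p := Nat.gcd_dvd_left p n
  have hdn : d ∣ n := Nat.gcd_dvd_right p n
  obtain ⟨p', hp'⟩ := hdp
  obtain ⟨n', hn'⟩ := hdn
  have hpd : p / d = p' := by rw [hp', Nat.mul_div_cancel_left _ hd0]
  have hnd : n / d = n' := by rw [hn', Nat.mul_div_cancel_left _ hd0]
  have hcop : Nat.Coprime p' n' := by
    have h := Nat.coprime_div_gcd_div_gcd (m := p) (n := n) hd0
    rwa [← hd, hpd, hnd] at h
  rw [hpd]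
  constructor
  · intro h
    have h2 : d * p' ∣ d * (v * n') := by
      rw [← hp']
      refine h.trans ?_
      exact ⟨1, by rw [hn']; ring⟩
    exact hcop.dvd_of_dvd_mul_right ((Nat.mul_dvd_mul_iff_left hd0).mp h2)
  · intro h
    have h1 : p ∣ d * v := by rw [hp']; exact Nat.mul_dvd_mul_left d h
    refine h1.trans ⟨n', ?_⟩
    rw [hn']; ring

private lemma aux_mem_zmultiples (r p : ℕ) [NeZero r] (hpr : p ∣ r) (b : ZMod r) :
    b ∈ AddSubgroup.zmultiples (p : ZMod r) ↔ p ∣ b.val := by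
  constructor
  · intro hb
    obtain ⟨k, hk⟩ := AddSubgroup.mem_zmultiples_iff.mp hb
    have : ((b.val : ℕ) : ZMod p) = 0 := by
      calc ((b.val : ℕ) : ZMod p) = ZMod.castHom hpr (ZMod p) ((b.val : ℕ) : ZMod r) := by
            rw [map_natCast]
        _ = ZMod.castHom hpr (ZMod p) b := by rw [ZMod.natCast_zmod_val]
        _ = ZMod.castHom hpr (ZMod p) (k • ((p:ℕ) : ZMod r)) := by rw [hk]
        _ = k • ((p : ℕ) : ZMod p) := by rw [map_zsmul, map_natCast]
        _ = 0 := by rw [ZMod.natCast_self, smul_zero]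
    exact (ZMod.natCast_eq_zero_iff _ _).mp this
  · rintro ⟨t, ht⟩
    refine AddSubgroup.mem_zmultiples_iff.mpr ⟨(t:ℤ), ?_⟩
    have h2 : ((p*t : ℕ) : ZMod r) = b := by rw [← ht, ZMod.natCast_zmod_val]
    rw [← h2, zsmul_eq_mul]
    push_cast
    ring

private lemma aux_perm_central {n : ℕ} (hn : 3 ≤ n) (π : Equiv.Perm (Fin n))
    (h : ∀ σ : Equiv.Perm (Fin n), π * σ = σ * π) : π = 1 := by
  by_contra hπ
  obtain ⟨i, hi⟩ : ∃ i, π i ≠ i := by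
    by_contra h'
    push_neg at h'
    exact hπ (Equiv.ext h')
  obtain ⟨k, hki, hkpi⟩ : ∃ k : Fin n, k ≠ i ∧ k ≠ π i := by
    by_contra h'
    push_neg at h'
    have hsub : (Finset.univ : Finset (Fin n)) ⊆ {i, π i} := by
      intro k _
      rcases eq_or_ne k i with rfl | hk
      · simp
      · simp [h' k hk]
    have hcard := Finset.card_le_card hsub
    have h2 : (({i, π i} : Finset (Fin n)).card) ≤ 2 := by
      refine (Finset.card_insert_le _ _).trans ?_
      simp
    simp only [Finset.card_univ, Fintype.card_fin] at hcard
    omega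
  have h1 : (π * Equiv.swap i k) i = (Equiv.swap i k * π) i := by rw [h]
  simp only [Equiv.Perm.mul_apply] at h1
  rw [Equiv.swap_apply_left, Equiv.swap_apply_of_ne_of_ne hi (Ne.symm hkpi)] at h1
  exact hki (π.injective h1)
private lemma aux_cElt_pow (r n m : ℕ) :
    (WP.cElt r n) ^ m = ((fun _ => (m : ZMod r)), (1 : Equiv.Perm (Fin n))) := by
  induction m with
  | zero =>
    refine Prod.ext ?_ rfl
    funext i
    show ((1 : WP r n)).1 i = ((0:ℕ) : ZMod r)
    simp
  | succ k ih =>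
    rw [pow_succ, ih]
    refine Prod.ext ?_ ?_
    · funext i
      show (k : ZMod r) + 1 = ((k+1 : ℕ) : ZMod r)
      push_cast; rfl
    · show (1 : Equiv.Perm (Fin n)) * 1 = 1
      simp

private lemma aux_wDelta_pair {r n : ℕ} (x : Fin n → ZMod r) (σ : Equiv.Perm (Fin n)) :
    WP.wDelta (r := r) (n := n) (x, σ) = ∑ i, x i := rfl

/-- The diagonal part of the center of `G(r,p,n)` is the cyclic group generated
by `c^{p/d}` where `d = gcd(p,n)`; it is the full center except for
`(r,p,n) ∈ {(1,1,2), (2,2,2)}`, in which cases `G(r,p,n)` is abelian. -/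
theorem center_Grpn (r p n : ℕ) [NeZero r] (hp : 0 < p) (hn : 0 < n)
    (hpr : p ∣ r) :
    (∀ g : WP r n,
      (g ∈ Grpn r p n ∧ g.2 = 1 ∧ ∀ h ∈ Grpn r p n, g * h = h * g) ↔
        ∃ j : ℕ, j < Nat.gcd p n * (r / p) ∧
          g = WP.cElt r n ^ (j * (p / Nat.gcd p n))) ∧
    ((r, p, n) ≠ (1, 1, 2) ∧ (r, p, n) ≠ (2, 2, 2) →
      ∀ g : WP r n, g ∈ Grpn r p n → (∀ h ∈ Grpn r p n, g * h = h * g) →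
        g.2 = 1) ∧
    ((r, p, n) = (1, 1, 2) ∨ (r, p, n) = (2, 2, 2) →
      ∀ g h : WP r n, g ∈ Grpn r p n → h ∈ Grpn r p n → g * h = h * g) := by
  have hr0 : 0 < r := Nat.pos_of_ne_zero (NeZero.ne r)
  have hd0 : 0 < Nat.gcd p n := Nat.gcd_pos_of_pos_left n hp
  have hdp : Nat.gcd p n ∣ p := Nat.gcd_dvd_left p n
  have hdn : Nat.gcd p n ∣ n := Nat.gcd_dvd_right p n
  have he0 : 0 < p / Nat.gcd p n := Nat.div_pos (Nat.le_of_dvd hp hdp) hd0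
  have hede : p / Nat.gcd p n * Nat.gcd p n = p := Nat.div_mul_cancel hdp
  refine ⟨?_, ?_, ?_⟩
  · intro g
    constructor
    · rintro ⟨hmem, hpi, hcomm⟩
      have hconst : ∀ i j : Fin n, g.1 i = g.1 j := by
        intro i j
        have hmemh : (((0 : Fin n → ZMod r), Equiv.swap i j) : WP r n) ∈ Grpn r p n := by
          refine mem_Grpn.mpr ?_
          rw [aux_wDelta_pair]
          simpa using zero_mem (AddSubgroup.zmultiples ((p : ℕ) : ZMod r))
        have h1 := congrArg Prod.fst (hcomm _ hmemh)
        change g.1 ∘ ⇑(Equiv.swap i j) + 0 = (0 : Fin n → ZMod r) ∘ ⇑g.2 + g.1 at h1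
        simp only [hpi] at h1
        have h2 := congrFun h1 j
        simpa [Equiv.swap_apply_right] using h2
      set a := g.1 ⟨0, hn⟩ with ha
      have hga : g.1 = fun _ => a := funext fun i => hconst i ⟨0, hn⟩
      have hav : ((a.val : ℕ) : ZMod r) = a := ZMod.natCast_zmod_val a
      have hdelta : WP.wDelta g = ((n * a.val : ℕ) : ZMod r) := by
        have h0 : WP.wDelta g = ∑ i, g.1 i := rfl
        rw [h0, hga]
        rw [Finset.sum_const, Finset.card_univ, Fintype.card_fin, nsmul_eq_mul,
          Nat.cast_mul, hav]
      have hpnv : p ∣ n * a.val := by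
        have h3 := hmem
        rw [mem_Grpn, hdelta, aux_mem_zmultiples r p hpr] at h3
        rwa [ZMod.val_natCast, Nat.dvd_mod_iff hpr] at h3
      have hev : p / Nat.gcd p n ∣ a.val := (aux_dvd_iff p n a.val hp).mp hpnv
      obtain ⟨j, hj⟩ := hev
      refine ⟨j, ?_, ?_⟩
      · have hlt : a.val < r := ZMod.val_lt a
        have hre : p / Nat.gcd p n * (Nat.gcd p n * (r / p)) = r := by
          rw [← mul_assoc, hede, Nat.mul_div_cancel' hpr]
        have h4 : p / Nat.gcd p n * j < p / Nat.gcd p n * (Nat.gcd p n * (r / p)) := by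
          rw [← hj, hre]; exact hlt
        exact Nat.lt_of_mul_lt_mul_left h4
      · rw [aux_cElt_pow]
        refine Prod.ext ?_ hpi
        rw [hga]
        funext i
        have h5 : a.val = j * (p / Nat.gcd p n) := by rw [hj, mul_comm]
        rw [← hav, h5]
    · rintro ⟨j, hjlt, rfl⟩
      rw [aux_cElt_pow]
      have hdelta : WP.wDelta (((fun _ => ((j * (p / Nat.gcd p n) : ℕ) : ZMod r)),
          (1 : Equiv.Perm (Fin n))) : WP r n)
          = ((n * (j * (p / Nat.gcd p n)) : ℕ) : ZMod r) := by
        rw [aux_wDelta_pair, Finset.sum_const, Finset.card_univ, Fintype.card_fin,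
          nsmul_eq_mul, ← Nat.cast_mul]
      refine ⟨?_, rfl, ?_⟩
      · refine mem_Grpn.mpr ?_
        rw [hdelta, aux_mem_zmultiples r p hpr, ZMod.val_natCast,
          Nat.dvd_mod_iff hpr]
        have h7 : n * (p / Nat.gcd p n) = p * (n / Nat.gcd p n) := by
          rw [← Nat.mul_div_assoc n hdp, mul_comm n p, Nat.mul_div_assoc p hdn]
        refine ⟨n / Nat.gcd p n * j, ?_⟩
        calc n * (j * (p / Nat.gcd p n))
            = n * (p / Nat.gcd p n) * j := by ring
          _ = p * (n / Nat.gcd p n) * j := by rw [h7]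
          _ = p * (n / Nat.gcd p n * j) := by ring
      · intro h _
        refine Prod.ext ?_ ?_
        · funext i
          exact add_comm _ _
        · show (1 : Equiv.Perm (Fin n)) * h.2 = h.2 * 1
          simp only [one_mul, mul_one]
  · rintro ⟨hne1, hne2⟩ g hg hcomm
    have hy : ∀ y : Fin n → ZMod r,
        (∑ i, y i) ∈ AddSubgroup.zmultiples ((p : ℕ) : ZMod r) →
        ∀ i, y (g.2 i) = y i := by
      intro y hyd i
      have hmemh : ((y, (1 : Equiv.Perm (Fin n))) : WP r n) ∈ Grpn r p n := by
        refine mem_Grpn.mpr ?_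
        rw [aux_wDelta_pair]; exact hyd
      have h1 := congrArg Prod.fst (hcomm _ hmemh)
      change g.1 ∘ ⇑(1 : Equiv.Perm (Fin n)) + y = y ∘ ⇑g.2 + g.1 at h1
      have h2 := congrFun h1 i
      simp only [Pi.add_apply, Function.comp_apply, Equiv.Perm.coe_one, id_eq] at h2
      have h3 : y i + g.1 i = y (g.2 i) + g.1 i := by
        rw [← h2]; ring
      exact (add_right_cancel h3).symm
    by_cases h1 : n = 1
    · subst h1
      exact Equiv.ext fun i => Subsingleton.elim _ _
    by_cases h2 : n = 2
    · subst h2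
      by_contra hτ
      have hτ0 : g.2 0 = 1 :=
        (by decide : ∀ π : Equiv.Perm (Fin 2), π ≠ 1 → π 0 = 1) g.2 hτ
      rcases eq_or_ne p r with hpr2 | hpr2
      · have hr1 : r ≠ 1 := by
          rintro rfl
          exact hne1 (by simp [hpr2])
        have hr2 : r ≠ 2 := by
          rintro rfl
          exact hne2 (by simp [hpr2])
        have hr3 : 3 ≤ r := by omega
        set y : Fin 2 → ZMod r := fun i => if i = 0 then 1 else -1 with hy'
        have hyd : (∑ i, y i) ∈ AddSubgroup.zmultiples ((p : ℕ) : ZMod r) := by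
          rw [Fin.sum_univ_two]
          simpa [hy'] using zero_mem (AddSubgroup.zmultiples ((p : ℕ) : ZMod r))
        have h4 := hy y hyd 0
        rw [hτ0] at h4
        simp only [hy'] at h4
        norm_num at h4
        have h5 : ((2 : ℕ) : ZMod r) = 0 := by
          push_cast
          linear_combination -h4
        have h6 : r ∣ 2 := (ZMod.natCast_eq_zero_iff _ _).mp h5
        exact absurd (Nat.le_of_dvd (by norm_num) h6) (by omega)
      · have hplt : p < r := Nat.lt_of_le_of_ne (Nat.le_of_dvd hr0 hpr) hpr2
        set y : Fin 2 → ZMod r := fun i => if i = 0 then ((p : ℕ) : ZMod r) else 0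
          with hy'
        have hyd : (∑ i, y i) ∈ AddSubgroup.zmultiples ((p : ℕ) : ZMod r) := by
          rw [Fin.sum_univ_two]
          simp only [hy', if_pos rfl]
          simpa using AddSubgroup.mem_zmultiples ((p : ℕ) : ZMod r)
        have h4 := hy y hyd 0
        rw [hτ0] at h4
        simp only [hy'] at h4
        norm_num at h4
        have h5 : r ∣ p := by
          rwa [eq_comm, ZMod.natCast_eq_zero_iff] at h4
        exact absurd (Nat.le_of_dvd hp h5) (by omega)
    · have hn3 : 3 ≤ n := by omega
      refine aux_perm_central hn3 g.2 fun σ => ?_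
      have hmemh : (((0 : Fin n → ZMod r), σ) : WP r n) ∈ Grpn r p n := by
        refine mem_Grpn.mpr ?_
        rw [aux_wDelta_pair]
        simpa using zero_mem (AddSubgroup.zmultiples ((p : ℕ) : ZMod r))
      exact congrArg Prod.snd (hcomm _ hmemh)
  · rintro (hcase | hcase) g h hg hh
    · obtain ⟨hr, hp', hn'⟩ : r = 1 ∧ p = 1 ∧ n = 2 := by
        simpa [Prod.ext_iff] using hcase
      subst hr; subst hp'; subst hn'
      refine Prod.ext (Subsingleton.elim _ _) ?_
      exact (by decide : ∀ a b : Equiv.Perm (Fin 2), a * b = b * a) _ _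
    · obtain ⟨hr, hp', hn'⟩ : r = 2 ∧ p = 2 ∧ n = 2 := by
        simpa [Prod.ext_iff] using hcase
      subst hr; subst hp'; subst hn'
      have hgc : ∀ gg : WP 2 2, gg ∈ Grpn 2 2 2 → gg.1 1 = gg.1 0 := by
        intro gg hgg
        rw [mem_Grpn] at hgg
        have hΔ : WP.wDelta gg = gg.1 0 + gg.1 1 := by
          have h0 : WP.wDelta gg = ∑ i, gg.1 i := rfl
          rw [h0, Fin.sum_univ_two]
        rw [hΔ] at hgg
        obtain ⟨k, hk⟩ := AddSubgroup.mem_zmultiples_iff.mp hgg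
        have hz : ((2 : ℕ) : ZMod 2) = 0 := by decide
        rw [hz, smul_zero] at hk
        exact (by decide : ∀ a b : ZMod 2, a + b = 0 → b = a) _ _ hk.symm
      have hcomp : ∀ (x : Fin 2 → ZMod 2) (σ : Equiv.Perm (Fin 2)), x 1 = x 0 →
          x ∘ ⇑σ = x := by
        intro x σ hx
        have hval : ∀ j : Fin 2, x j = x 0 := by
          intro j
          fin_cases j
          · rfl
          · exact hx
        funext i
        simp only [Function.comp_apply, hval]
      refine Prod.ext ?_ ?_
      · show g.1 ∘ ⇑h.2 + h.1 = h.1 ∘ ⇑g.2 + g.1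
        rw [hcomp g.1 h.2 (hgc g hg), hcomp h.1 g.2 (hgc h hh), add_comm]
      · exact (by decide : ∀ a b : Equiv.Perm (Fin 2), a * b = b * a) _ _
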